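/- arXiv:1608.04151 — 4 statements merged into one kernel-verified Lean document; each statement's English description precedes it below -/
import Mathlib

section
/- Let R be a commutative ring, S and T ideals of R, and let A, B ∈ GL_n(R) be invertible matrices such that A ≡ 1 mod S (every entry of A - 1 lies in S) and B ≡ 1 mod T. Then the commutator [A, B] = A B A⁻¹ B⁻¹ satisfies [A,B] ≡ 1 mod S·T. -/
open Matrix

/-- If `A ≡ 1 mod S` and `B ≡ 1 mod T` in `GL n R`, then the commutator
`A * B * A⁻¹ * B⁻¹ ≡ 1 mod S * T`. -/
theorem stmt_1 {n : ℕ} (hn : 1 ≤ n) {R : Type*} [CommRing R] (S T : Ideal R)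
    (A B : GL (Fin n) R)
    (hA : ∀ i j, ((A : Matrix (Fin n) (Fin n) R) - 1) i j ∈ S)
    (hB : ∀ i j, ((B : Matrix (Fin n) (Fin n) R) - 1) i j ∈ T) :
    ∀ i j, (((A * B * A⁻¹ * B⁻¹ : GL (Fin n) R) : Matrix (Fin n) (Fin n) R) - 1) i j ∈ S * T := by
  intro i j
  set A' : Matrix (Fin n) (Fin n) R := (A : Matrix (Fin n) (Fin n) R)
  set B' : Matrix (Fin n) (Fin n) R := (B : Matrix (Fin n) (Fin n) R)
  set Ai : Matrix (Fin n) (Fin n) R := ((A⁻¹ : GL (Fin n) R) : Matrix (Fin n) (Fin n) R)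
  set Bi : Matrix (Fin n) (Fin n) R := ((B⁻¹ : GL (Fin n) R) : Matrix (Fin n) (Fin n) R)
  have hAAi : A' * Ai = 1 := by
    have := congrArg (Units.val) (mul_inv_cancel A)
    simpa [A', Ai] using this
  have hBBi : B' * Bi = 1 := by
    have := congrArg (Units.val) (mul_inv_cancel B)
    simpa [B', Bi] using this
  -- commutator matrix
  have hco : ((A * B * A⁻¹ * B⁻¹ : GL (Fin n) R) : Matrix (Fin n) (Fin n) R)
      = A' * B' * Ai * Bi := rfl
  have h2 : B' * A' * (Ai * Bi) = 1 := by
    rw [mul_assoc, ← mul_assoc A' Ai Bi, hAAi, one_mul, hBBi]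
  have key : ((A * B * A⁻¹ * B⁻¹ : GL (Fin n) R) : Matrix (Fin n) (Fin n) R) - 1
      = (A' * B' - B' * A') * (Ai * Bi) := by
    rw [hco, sub_mul, h2, mul_assoc]
  rw [key]
  -- entries of A'*B' - B'*A' lie in S*T
  have hcomm : ∀ i j, (A' * B' - B' * A') i j ∈ S * T := by
    intro i j
    have h1 : A' * B' - B' * A'
        = (A' - 1) * (B' - 1) - (B' - 1) * (A' - 1) := by noncomm_ring
    rw [h1]
    rw [Matrix.sub_apply]
    refine sub_mem ?_ ?_
    · rw [Matrix.mul_apply]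
      exact Submodule.sum_mem _ fun k _ => Ideal.mul_mem_mul (hA i k) (hB k j)
    · rw [Matrix.mul_apply]
      refine Submodule.sum_mem _ fun k _ => ?_
      rw [mul_comm ((B' - 1) i k)]
      exact Ideal.mul_mem_mul (hA k j) (hB i k)
  rw [Matrix.mul_apply]
  exact Submodule.sum_mem _ fun k _ => Ideal.mul_mem_right _ _ (hcomm i k)
end

section
/- The subgroup of GL_2(ℤ) generated by the matrices [[1,2],[0,1]] and [[1,0],[2,1]] is a free group of rank 2, has finite index in GL_2(ℤ), and contains the kernel of the reduction map GL_2(ℤ) → GL_2(ℤ/4ℤ). -/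
/-!
Write `A = [[1,2],[0,1]]` and `B = [[1,0],[2,1]]`, so that `A ^ k = [[1,2k],[0,1]]` and
`B ^ k = [[1,0],[2k,1]]`. Freeness is ping-pong on `ℤ²`: every nonzero power of `A` maps
`{|y| > |x|}` into `{|x| > |y|}`, and every nonzero power of `B` does the converse.
For the kernel, take `M = [[a,b],[c,d]]` with `det M = 1`, `a ≡ 1 mod 4` and `b`, `c` even, a
condition satisfied by the kernel and preserved by left multiplication with `A ^ k` (which
adds `2k` times the second row to the first) and `B ^ k`. As `a` is odd and `c` even, one of
these, with `k = ±1`, lowers `|a| + |c|` unless `c = 0`; then `a = d = 1` and `M = A ^ (b / 2)`.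
Finite index follows because the kernel of reduction has finite index.
-/

open Matrix

open scoped Function Pointwise in
theorem FreeGroup.injective_lift_of_zpow_ping_pong {ι G α : Type*} [Nontrivial ι] [Group G]
    [MulAction G α] (a : ι → G) (X : ι → Set α) (hX : ∀ i, (X i).Nonempty)
    (hXdisj : Pairwise (Disjoint on X))
    (hpp : Pairwise fun i j => ∀ n : ℤ, n ≠ 0 → a i ^ n • X j ⊆ X i) :
    Function.Injective (FreeGroup.lift a) := by
  have hlift : FreeGroup.lift a =
      (Monoid.CoprodI.lift fun i => FreeGroup.lift fun _ => a i).comp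
        freeGroupEquivCoprodI.toMonoidHom := by
    ext i
    simp
  rw [hlift, MonoidHom.coe_comp]
  refine .comp (Monoid.CoprodI.lift_injective_of_ping_pong _ ?_ X hX hXdisj ?_)
    freeGroupEquivCoprodI.injective
  · right
    refine ⟨Classical.arbitrary ι, ?_⟩
    rw [FreeGroup.freeGroupUnitEquivInt.cardinal_eq, Cardinal.mk_denumerable]
    exact Cardinal.natCast_le_aleph0
  · intro i j hij
    refine FreeGroup.freeGroupUnitEquivInt.forall_congr_left.mpr fun n hn => ?_
    have hn0 : n ≠ 0 := by
      rintro rfl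
      exact hn rfl
    simpa [FreeGroup.freeGroupUnitEquivInt] using hpp hij n hn0

theorem Matrix.GeneralLinearGroup.coe_zpow_of_coe_eq_one_add {n R : Type*} [Fintype n]
    [DecidableEq n] [CommRing R] {U : GL n R} {N : Matrix n n R} (hN : N * N = 0)
    (hU : (U : Matrix n n R) = 1 + N) (k : ℤ) :
    ((U ^ k : GL n R) : Matrix n n R) = 1 + k • N := by
  have hUinv : ((U⁻¹ : GL n R) : Matrix n n R) = 1 - N := by
    rw [coe_units_inv, hU]
    exact Matrix.inv_eq_left_inv (by simp [sub_mul, mul_add, hN])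
  induction k using Int.induction_on with
  | zero => simp
  | succ k ih =>
    rw [_root_.zpow_add_one, Units.val_mul, ih, hU]
    simp [add_mul, mul_add, mul_assoc, hN, add_smul]
    abel
  | pred k ih =>
    rw [_root_.zpow_sub_one, Units.val_mul, ih, hUinv]
    simp [add_mul, mul_sub, mul_assoc, hN, sub_smul]
    abel

theorem Int.natAbs_lt_natAbs_add_two_mul {x y : ℤ} {n : ℤ} (hn : n ≠ 0)
    (h : x.natAbs < y.natAbs) : y.natAbs < (x + 2 * n * y).natAbs := by
  have : y.natAbs ≤ n.natAbs * y.natAbs := Nat.le_mul_of_pos_left _ (Int.natAbs_pos.mpr hn)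
  have : (2 * n * y).natAbs = 2 * (n.natAbs * y.natAbs) := by
    simp [Int.natAbs_mul, mul_assoc]
  omega

theorem Int.exists_natAbs_add_two_mul_lt {x y : ℤ} (hy : y ≠ 0) (h : y.natAbs < x.natAbs) :
    ∃ k : ℤ, (x + 2 * k * y).natAbs < x.natAbs := by
  rcases (by omega : (x + 2 * y).natAbs < x.natAbs ∨ (x - 2 * y).natAbs < x.natAbs) with h | h
  exacts [⟨1, by simpa using h⟩, ⟨-1, by simpa [sub_eq_add_neg] using h⟩]

theorem FreeGroup.range_lift_pair {G : Type*} [Group G] (a b : G) :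
    (FreeGroup.lift ![a, b]).range = Subgroup.closure {a, b} := by
  rw [FreeGroup.range_lift_eq_closure, range_cons, range_cons, range_empty, Set.union_empty,
    Set.singleton_union]

namespace Matrix.GeneralLinearGroup

variable {ι : Type*} [Fintype ι] [DecidableEq ι] {N : ℕ} {M : GL ι ℤ}

theorem dvd_sub_one_apply_of_mem_ker (hM : M ∈ (map (Int.castRingHom (ZMod N))).ker) (i j : ι) :
    (N : ℤ) ∣ M i j - (1 : Matrix ι ι ℤ) i j := by
  rw [← ZMod.intCast_eq_intCast_iff_dvd_sub]
  have h := congrArg (fun g : GL ι (ZMod N) => g i j) (MonoidHom.mem_ker.mp hM)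
  simp only [GeneralLinearGroup.map_apply, coe_one, eq_intCast] at h
  rw [h, one_apply, one_apply]
  split_ifs <;> simp

theorem det_eq_one_of_mem_ker [Fact (2 < N)] (hM : M ∈ (map (Int.castRingHom (ZMod N))).ker) :
    (M : Matrix ι ι ℤ).det = 1 := by
  have h := congrArg (fun g => (det g : ZMod N)) (MonoidHom.mem_ker.mp hM)
  simp only [GeneralLinearGroup.map_det, Units.coe_map, val_det_apply, map_one, Units.val_one] at h
  rcases Int.isUnit_iff.mp ((isUnit_iff_isUnit_det _).mp M.isUnit) with h1 | h1
  · exact h1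
  · rw [h1] at h
    exact absurd (by simpa using h) (ZMod.neg_one_ne_one (n := N))

end Matrix.GeneralLinearGroup

namespace Sanov

variable {A B : GL (Fin 2) ℤ}

theorem coe_zpow_A (hA : (A : Matrix (Fin 2) (Fin 2) ℤ) = !![1, 2; 0, 1]) (k : ℤ) :
    ((A ^ k : GL (Fin 2) ℤ) : Matrix (Fin 2) (Fin 2) ℤ) = !![1, 2 * k; 0, 1] := by
  rw [GeneralLinearGroup.coe_zpow_of_coe_eq_one_add (N := !![0, 2; 0, 0]) _ _ k]
  · ext i j; fin_cases i <;> fin_cases j <;> simp [mul_comm]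
  · ext i j; fin_cases i <;> fin_cases j <;> rfl
  · rw [hA]; ext i j; fin_cases i <;> fin_cases j <;> simp

theorem coe_zpow_B (hB : (B : Matrix (Fin 2) (Fin 2) ℤ) = !![1, 0; 2, 1]) (k : ℤ) :
    ((B ^ k : GL (Fin 2) ℤ) : Matrix (Fin 2) (Fin 2) ℤ) = !![1, 0; 2 * k, 1] := by
  rw [GeneralLinearGroup.coe_zpow_of_coe_eq_one_add (N := !![0, 0; 2, 0]) _ _ k]
  · ext i j; fin_cases i <;> fin_cases j <;> simp [mul_comm]
  · ext i j; fin_cases i <;> fin_cases j <;> rfl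
  · rw [hB]; ext i j; fin_cases i <;> fin_cases j <;> simp

theorem injective_lift (hA : (A : Matrix (Fin 2) (Fin 2) ℤ) = !![1, 2; 0, 1])
    (hB : (B : Matrix (Fin 2) (Fin 2) ℤ) = !![1, 0; 2, 1]) :
    Function.Injective (FreeGroup.lift ![A, B]) := by
  refine FreeGroup.injective_lift_of_zpow_ping_pong _
    ![{v : Fin 2 → ℤ | (v 1).natAbs < (v 0).natAbs}, {v | (v 0).natAbs < (v 1).natAbs}]
    (fun i => ?_) (fun i j hij => ?_) (fun i j hij n hn => ?_)
  · fin_cases i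
    exacts [⟨![1, 0], by simp⟩, ⟨![0, 1], by simp⟩]
  · rw [Function.onFun, Set.disjoint_left]
    fin_cases i <;> fin_cases j <;> simp at hij ⊢ <;> omega
  · rintro _ ⟨v, hv, rfl⟩
    fin_cases i <;> fin_cases j <;> simp only [ne_eq, not_true_eq_false] at hij <;>
      simp only [cons_val_zero, cons_val_one, Set.mem_ofPred_eq, Fin.zero_eta, Fin.mk_one] at hv ⊢
    · rw [GeneralLinearGroup.fin_two_smul, coe_zpow_A hA]
      simpa using Int.natAbs_lt_natAbs_add_two_mul hn hv
    · rw [GeneralLinearGroup.fin_two_smul, coe_zpow_B hB]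
      simpa [add_comm] using Int.natAbs_lt_natAbs_add_two_mul hn hv

theorem mem_closure_of_coe_eq (hA : (A : Matrix (Fin 2) (Fin 2) ℤ) = !![1, 2; 0, 1])
    (hB : (B : Matrix (Fin 2) (Fin 2) ℤ) = !![1, 0; 2, 1]) {a b c d : ℤ}
    (hdet : a * d - b * c = 1) (ha : 4 ∣ a - 1) (hb : 2 ∣ b) (hc : 2 ∣ c) {M : GL (Fin 2) ℤ}
    (hM : (M : Matrix (Fin 2) (Fin 2) ℤ) = !![a, b; c, d]) :
    M ∈ Subgroup.closure {A, B} := by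
  have hAmem : A ∈ Subgroup.closure {A, B} := Subgroup.subset_closure (by simp)
  have hBmem : B ∈ Subgroup.closure {A, B} := Subgroup.subset_closure (by simp)
  induction hn : a.natAbs + c.natAbs using Nat.strong_induction_on generalizing a b c d M with
  | _ n ih =>
  rcases eq_or_ne c 0 with rfl | hc0
  · have had : a = 1 ∧ d = 1 := by
      rcases Int.eq_one_or_neg_one_of_mul_eq_one' (by simpa using hdet) with h | h <;> omega
    obtain ⟨k, rfl⟩ := hb
    have hMk : M = A ^ k := Units.ext (by rw [hM, coe_zpow_A hA, had.1, had.2])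
    exact hMk ▸ zpow_mem hAmem k
  · rcases (by omega : c.natAbs < a.natAbs ∨ a.natAbs < c.natAbs) with hlt | hlt
    · obtain ⟨k, hk⟩ := Int.exists_natAbs_add_two_mul_lt hc0 hlt
      have h4 : 4 ∣ 2 * k * c := by
        obtain ⟨c', rfl⟩ := hc
        exact ⟨k * c', by ring⟩
      refine (Subgroup.mul_mem_cancel_left _ (zpow_mem hAmem k)).mp
        (ih _ (by omega) (a := a + 2 * k * c) (b := b + 2 * k * d) (c := c) (d := d)
          (by linear_combination hdet) (by omega)
          (dvd_add hb ⟨k * d, mul_assoc _ _ _⟩) hc ?_ rfl)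
      rw [Units.val_mul, coe_zpow_A hA, hM, mul_fin_two]
      simp only [one_mul, zero_mul, zero_add]
    · obtain ⟨k, hk⟩ := Int.exists_natAbs_add_two_mul_lt (by omega) hlt
      refine (Subgroup.mul_mem_cancel_left _ (zpow_mem hBmem k)).mp
        (ih _ (by omega) (a := a) (b := b) (c := c + 2 * k * a) (d := d + 2 * k * b)
          (by linear_combination hdet) ha hb
          (dvd_add hc ⟨k * a, mul_assoc _ _ _⟩) ?_ rfl)
      rw [Units.val_mul, coe_zpow_B hB, hM, mul_fin_two]
      simp only [one_mul, zero_mul, add_zero, add_comm (2 * k * _)]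

theorem ker_map_le_closure (hA : (A : Matrix (Fin 2) (Fin 2) ℤ) = !![1, 2; 0, 1])
    (hB : (B : Matrix (Fin 2) (Fin 2) ℤ) = !![1, 0; 2, 1]) :
    (GeneralLinearGroup.map (n := Fin 2) (Int.castRingHom (ZMod 4))).ker ≤
      Subgroup.closure {A, B} := by
  intro M hM
  have : Fact (2 < 4) := ⟨by norm_num⟩
  have hdvd := GeneralLinearGroup.dvd_sub_one_apply_of_mem_ker hM
  refine mem_closure_of_coe_eq hA hB (d := M 1 1) ?_ (by simpa using hdvd 0 0)
    (dvd_trans ⟨2, rfl⟩ (by simpa using hdvd 0 1))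
    (dvd_trans ⟨2, rfl⟩ (by simpa using hdvd 1 0)) (eta_fin_two _)
  rw [← det_fin_two, GeneralLinearGroup.det_eq_one_of_mem_ker hM]

end Sanov

/-- The subgroup of `GL₂(ℤ)` generated by `[[1,2],[0,1]]` and `[[1,0],[2,1]]` is free of
rank 2 (freely generated by these two matrices), has finite index, and contains the
kernel of reduction `GL₂(ℤ) → GL₂(ℤ/4ℤ)`. -/
theorem stmt_9 (A B : GL (Fin 2) ℤ)
    (hA : (A : Matrix (Fin 2) (Fin 2) ℤ) = !![1, 2; 0, 1])
    (hB : (B : Matrix (Fin 2) (Fin 2) ℤ) = !![1, 0; 2, 1])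
    (ψ : FreeGroup (Fin 2) →* GL (Fin 2) ℤ) (hψ : ψ = FreeGroup.lift ![A, B]) :
    Function.Injective ψ ∧
    ψ.range = Subgroup.closure {A, B} ∧
    (Subgroup.closure {A, B}).index ≠ 0 ∧
    (Matrix.GeneralLinearGroup.map (n := Fin 2) (Int.castRingHom (ZMod 4))).ker ≤
      Subgroup.closure {A, B} := by
  subst hψ
  have hker := Sanov.ker_map_le_closure hA hB
  exact ⟨Sanov.injective_lift hA hB, FreeGroup.range_lift_pair A B,
    (Subgroup.finiteIndex_of_le hker).index_ne_zero, hker⟩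
end

section
/- Let F₂ = ⟨x,y⟩, α: x↦x, y↦yx², β: x↦xy², y↦y automorphisms of F₂, and Δ = ker(F₂ → (ℤ/2ℤ)²) with free generators e₁ = x², e₂ = yxy⁻¹x⁻¹, e₃ = y², e₄ = xyxy⁻¹, e₅ = xy²x⁻¹. Then α and β preserve Δ, and α(e₃) = e₂e₄e₃e₁, α(e₅) = e₄e₂e₅e₁, β(e₁) = e₅e₁e₃, β(e₄) = e₅e₄e₃, while α fixes e₁, e₂, e₄ and β fixes e₂, e₃, e₅. -/
/-- The automorphisms `α : x ↦ x, y ↦ yx²` and `β : x ↦ xy², y ↦ y` of `F₂` preserve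
`Δ = ker(F₂ → (ℤ/2ℤ)²)`, and act on the free generators
`e₁ = x², e₂ = yxy⁻¹x⁻¹, e₃ = y², e₄ = xyxy⁻¹, e₅ = xy²x⁻¹` by
`α : e₁ ↦ e₁, e₂ ↦ e₂, e₃ ↦ e₂e₄e₃e₁, e₄ ↦ e₄, e₅ ↦ e₄e₂e₅e₁` and
`β : e₁ ↦ e₅e₁e₃, e₂ ↦ e₂, e₃ ↦ e₃, e₄ ↦ e₅e₄e₃, e₅ ↦ e₅`. -/
theorem stmt_12
    (x y : FreeGroup (Fin 2)) (hx : x = FreeGroup.of 0) (hy : y = FreeGroup.of 1)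
    (α β : MulAut (FreeGroup (Fin 2)))
    (hαx : α x = x) (hαy : α y = y * x ^ 2)
    (hβx : β x = x * y ^ 2) (hβy : β y = y)
    (φ : FreeGroup (Fin 2) →* Multiplicative (ZMod 2 × ZMod 2))
    (hφ : φ = FreeGroup.lift ![Multiplicative.ofAdd (1, 0), Multiplicative.ofAdd (0, 1)])
    (e₁ e₂ e₃ e₄ e₅ : FreeGroup (Fin 2))
    (he₁ : e₁ = x ^ 2) (he₂ : e₂ = y * x * y⁻¹ * x⁻¹) (he₃ : e₃ = y ^ 2)
    (he₄ : e₄ = x * y * x * y⁻¹) (he₅ : e₅ = x * y ^ 2 * x⁻¹) :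
    (∀ g ∈ φ.ker, α g ∈ φ.ker) ∧ (∀ g ∈ φ.ker, β g ∈ φ.ker) ∧
    α e₁ = e₁ ∧ α e₂ = e₂ ∧ α e₃ = e₂ * e₄ * e₃ * e₁ ∧ α e₄ = e₄ ∧
    α e₅ = e₄ * e₂ * e₅ * e₁ ∧
    β e₁ = e₅ * e₁ * e₃ ∧ β e₂ = e₂ ∧ β e₃ = e₃ ∧ β e₄ = e₅ * e₄ * e₃ ∧ β e₅ = e₅ := by
  subst he₁ he₂ he₃ he₄ he₅
  have hker : ∀ (γ : MulAut (FreeGroup (Fin 2))), γ x = x ∨ γ x = x * y ^ 2 →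
      γ y = y ∨ γ y = y * x ^ 2 → ∀ g ∈ φ.ker, γ g ∈ φ.ker := by
    intro γ hgx hgy g hg
    have key : φ.comp γ.toMonoidHom = φ := by
      apply FreeGroup.ext_hom
      intro a
      fin_cases a <;> simp only [MonoidHom.comp_apply, MulEquiv.coe_toMonoidHom, Fin.zero_eta, Fin.mk_one]
      · rw [show FreeGroup.of (0 : Fin 2) = x from hx.symm]
        rcases hgx with h | h <;> rw [h] <;>
          simp only [map_mul, map_pow, hφ, hx, hy, FreeGroup.lift_apply_of] <;> decide
      · rw [show FreeGroup.of (1 : Fin 2) = y from hy.symm]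
        rcases hgy with h | h <;> rw [h] <;>
          simp only [map_mul, map_pow, hφ, hx, hy, FreeGroup.lift_apply_of] <;> decide
    have : φ (γ g) = φ g := by
      have := DFunLike.congr_fun key g
      simpa using this
    simpa [MonoidHom.mem_ker, this] using hg
  refine ⟨hker α (Or.inl hαx) (Or.inr hαy), hker β (Or.inr hβx) (Or.inl hβy), ?_, ?_, ?_, ?_, ?_, ?_, ?_, ?_, ?_, ?_⟩ <;>
      simp only [map_mul, map_pow, map_inv, hαx, hαy, hβx, hβy]
  all_goals try simp [pow_two, mul_assoc]
  all_goals group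
end

section
/- Let N be the normal closure in Δ of {e₂, e₁e₄, e₃e₅}, where Δ is free on e₁,…,e₅ and α, β are the automorphisms of Δ defined by α: e₁↦e₁, e₂↦e₂, e₃↦e₂e₄e₃e₁, e₄↦e₄, e₅↦e₄e₂e₅e₁ and β: e₁↦e₅e₁e₃, e₂↦e₂, e₃↦e₃, e₄↦e₅e₄e₃, e₅↦e₅. Then α(N) ⊆ N and β(N) ⊆ N. -/
/-- Let `Δ = F(e₁,…,e₅)` be free of rank 5, `N` the normal closure of
`{e₂, e₁e₄, e₃e₅}`, and `α, β` the automorphisms of `Δ` with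
`α : e₁ ↦ e₁, e₂ ↦ e₂, e₃ ↦ e₂e₄e₃e₁, e₄ ↦ e₄, e₅ ↦ e₄e₂e₅e₁` and
`β : e₁ ↦ e₅e₁e₃, e₂ ↦ e₂, e₃ ↦ e₃, e₄ ↦ e₅e₄e₃, e₅ ↦ e₅`.
Then `α(N) ⊆ N` and `β(N) ⊆ N`. -/
theorem stmt_13
    (e : Fin 5 → FreeGroup (Fin 5)) (he : e = FreeGroup.of)
    (α β : MulAut (FreeGroup (Fin 5)))
    (hα1 : α (e 0) = e 0) (hα2 : α (e 1) = e 1)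
    (hα3 : α (e 2) = e 1 * e 3 * e 2 * e 0) (hα4 : α (e 3) = e 3)
    (hα5 : α (e 4) = e 3 * e 1 * e 4 * e 0)
    (hβ1 : β (e 0) = e 4 * e 0 * e 2) (hβ2 : β (e 1) = e 1)
    (hβ3 : β (e 2) = e 2) (hβ4 : β (e 3) = e 4 * e 3 * e 2)
    (hβ5 : β (e 4) = e 4)
    (N : Subgroup (FreeGroup (Fin 5)))
    (hN : N = Subgroup.normalClosure {e 1, e 0 * e 3, e 2 * e 4}) :
    (∀ g ∈ N, α g ∈ N) ∧ (∀ g ∈ N, β g ∈ N) := by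
  haveI hnorm : N.Normal := hN ▸ Subgroup.normalClosure_normal
  -- membership of generators
  have m1 : e 1 ∈ N := hN ▸ Subgroup.subset_normalClosure (by simp)
  have m2 : e 0 * e 3 ∈ N := hN ▸ Subgroup.subset_normalClosure (by simp)
  have m3 : e 2 * e 4 ∈ N := hN ▸ Subgroup.subset_normalClosure (by simp)
  -- quotient facts
  set π : FreeGroup (Fin 5) →* FreeGroup (Fin 5) ⧸ N := QuotientGroup.mk' N with hπ
  have key : ∀ x : FreeGroup (Fin 5), π x = 1 → x ∈ N := by
    intro x h
    exact (QuotientGroup.eq_one_iff x).mp h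
  have q1 : π (e 1) = 1 := (QuotientGroup.eq_one_iff _).mpr m1
  have q2 : π (e 0) * π (e 3) = 1 := by
    rw [← map_mul]; exact (QuotientGroup.eq_one_iff _).mpr m2
  have q3 : π (e 2) * π (e 4) = 1 := by
    rw [← map_mul]; exact (QuotientGroup.eq_one_iff _).mpr m3
  have q2' : π (e 3) = (π (e 0))⁻¹ := (inv_eq_of_mul_eq_one_right q2).symm
  have q3' : π (e 4) = (π (e 2))⁻¹ := (inv_eq_of_mul_eq_one_right q3).symm
  -- generic reduction
  have main : ∀ (φ : MulAut (FreeGroup (Fin 5))),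
      φ (e 1) ∈ N → φ (e 0 * e 3) ∈ N → φ (e 2 * e 4) ∈ N →
      ∀ g ∈ N, φ g ∈ N := by
    intro φ h1 h2 h3 g hg
    have hle : N ≤ N.comap φ.toMonoidHom := by
      haveI : (N.comap φ.toMonoidHom).Normal := Subgroup.Normal.comap hnorm _
      conv_lhs => rw [hN]
      apply Subgroup.normalClosure_le_normal
      intro x hx
      simp only [Set.mem_insert_iff, Set.mem_singleton_iff] at hx
      rcases hx with rfl | rfl | rfl <;>
        simp only [Subgroup.mem_comap, SetLike.mem_coe, MulEquiv.coe_toMonoidHom] <;>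
        assumption
    exact hle hg
  constructor
  · apply main α
    · rw [hα2]; exact m1
    · rw [map_mul, hα1, hα4]; exact m2
    · apply key
      rw [map_mul, hα3, hα5]
      simp only [map_mul]
      rw [q1, q2', q3']
      group
  · apply main β
    · rw [hβ2]; exact m1
    · apply key
      rw [map_mul, hβ1, hβ4]
      simp only [map_mul]
      rw [q2', q3']
      group
    · rw [map_mul, hβ3, hβ5]; exact m3
end
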